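/- Let R be a commutative ring, V = R^{n+1}, e, e* with e*e = 1, and τ ∈ End(V) stable (e and e* both τ-cyclic). Then the compression τ_H ∈ End(V_H) is cyclic; more precisely, the functional ℓ ∈ V_H* defined by ℓ(v) = e*τv is a cyclic vector for the action of τ_H^* on V_H*. -/

import Mathlib

/-!
Both halves are one argument. If a surjection `g` satisfies `g (f m) = f' (g m) + c • y` and
`g x` lies in the `f'`-cyclic submodule of `y`, then the preimage of that submodule is `f`-stable
and contains `x`; so if `x` is cyclic for `f`, then `y` is cyclic for `f'`. For `V_H` take
`g = 1_H`, which kills `e` and satisfies `1_H τ = τ_H 1_H + e*(·) • 1_H τ e`. For `V_H*` take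
restriction to `V_H`, which kills `e*` and satisfies
`(ψ τ)|_{V_H} = ψ|_{V_H} τ_H + ψ(e) • ℓ`.
-/
section GGP

variable {R V : Type*} [CommRing R] [AddCommGroup V] [Module R V]

/-- The projection `1_H = 1 - e e*` onto `V_H = ker e*` along `e`. -/
def oneH (e : V) (eStar : Module.Dual R V) : Module.End R V :=
  LinearMap.id - eStar.smulRight e

/-- The compression `τ_H = 1_H τ 1_H` of `τ`, as an endomorphism of `V_H = ker e*`. -/
def tauH (e : V) (eStar : Module.Dual R V) (h : eStar e = 1) (τ : Module.End R V) :
    Module.End R (LinearMap.ker eStar) :=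
  LinearMap.restrict (oneH e eStar ∘ₗ τ)
    (p := LinearMap.ker eStar) (q := LinearMap.ker eStar)
    (fun x _ => by
      simp [oneH, LinearMap.mem_ker, LinearMap.sub_apply, LinearMap.smulRight_apply,
        map_smul, smul_eq_mul, h])

end GGP

open Polynomial

namespace Module.End

variable {R M N : Type*} [CommRing R] [AddCommGroup M] [Module R M]
  [AddCommGroup N] [Module R N]

noncomputable def cyclicSubmodule (f : Module.End R M) (v : M) : Submodule R M :=
  LinearMap.range ((LinearMap.applyₗ v).comp (aeval f).toLinearMap)

theorem cyclicSubmodule_eq_top_iff {f : Module.End R M} {v : M} :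
    cyclicSubmodule f v = ⊤ ↔ ∀ x, ∃ p : R[X], aeval f p v = x :=
  Submodule.eq_top_iff'

theorem self_mem_cyclicSubmodule (f : Module.End R M) (v : M) : v ∈ cyclicSubmodule f v :=
  ⟨1, by simp⟩

theorem apply_mem_cyclicSubmodule {f : Module.End R M} {v x : M}
    (hx : x ∈ cyclicSubmodule f v) : f x ∈ cyclicSubmodule f v := by
  obtain ⟨p, rfl⟩ := hx
  exact ⟨X * p, by simp [Module.End.mul_apply]⟩

theorem cyclicSubmodule_le {f : Module.End R M} {v : M} {P : Submodule R M}
    (hv : v ∈ P) (hP : P ≤ P.comap f) : cyclicSubmodule f v ≤ P := by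
  rintro _ ⟨p, rfl⟩
  exact aeval_apply_smul_mem_of_le_comap hv p f hP

theorem cyclicSubmodule_eq_top_of_intertwine {f : Module.End R M} {f' : Module.End R N}
    {x : M} {y : N} (hx : cyclicSubmodule f x = ⊤) (g : M →ₗ[R] N)
    (hg : Function.Surjective g) (hgx : g x ∈ cyclicSubmodule f' y)
    (hgf : ∀ m, ∃ c : R, g (f m) = f' (g m) + c • y) : cyclicSubmodule f' y = ⊤ := by
  have hle : cyclicSubmodule f x ≤ (cyclicSubmodule f' y).comap g := by
    refine cyclicSubmodule_le hgx fun m hm => ?_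
    obtain ⟨c, hc⟩ := hgf m
    rw [Submodule.mem_comap, Submodule.mem_comap, hc]
    exact add_mem (apply_mem_cyclicSubmodule hm)
      (Submodule.smul_mem _ c (self_mem_cyclicSubmodule f' y))
  rw [eq_top_iff, ← LinearMap.range_eq_top.mpr hg, LinearMap.range_eq_map, ← hx,
    Submodule.map_le_iff_le_comap]
  exact hle

theorem dualMap_aeval (f : Module.End R M) (p : R[X]) :
    (aeval f p).dualMap = aeval (f.dualMap : Module.End R (Module.Dual R M)) p := by
  have mul_X (q : R[X]) : (aeval f (q * X)).dualMap = f.dualMap * (aeval f q).dualMap := by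
    rw [map_mul, aeval_X, Module.End.mul_eq_comp, ← LinearMap.dualMap_comp_dualMap]
    rfl
  induction p using Polynomial.induction_on with
  | C a => ext; simp [Module.algebraMap_end_apply]
  | add p q hp hq =>
    rw [map_add, map_add, ← hp, ← hq]
    ext
    simp [LinearMap.dualMap_apply]
  | monomial n a ih =>
    set f' : Module.End R (Module.Dual R M) := f.dualMap
    have hcomm := (Commute.all X (C a * X ^ n)).map (aeval (R := R) f')
    rw [aeval_X] at hcomm
    rw [pow_succ, ← mul_assoc, mul_X, ih, map_mul (aeval f') _ X, aeval_X, hcomm.eq]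

end Module.End

open Module.End

section Compression

variable {R V : Type*} [CommRing R] [AddCommGroup V] [Module R V]
  {e : V} {eStar : Module.Dual R V} (h : eStar e = 1) (τ : Module.End R V)

def projH : V →ₗ[R] LinearMap.ker eStar :=
  LinearMap.codRestrict _ (oneH e eStar) fun x => by simp [oneH, h]

@[simp]
theorem coe_projH_apply (x : V) : (projH h x : V) = x - eStar x • e := rfl

theorem projH_apply_self : projH h e = 0 := by
  ext
  simp [h]

theorem projH_comp_subtype : projH h ∘ₗ (LinearMap.ker eStar).subtype = LinearMap.id := by
  ext w
  simp [LinearMap.mem_ker.mp w.2]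

theorem coe_tauH_apply (w : LinearMap.ker eStar) :
    (tauH e eStar h τ w : V) = τ w - eStar (τ w) • e :=
  rfl

theorem projH_apply_tau (x : V) :
    projH h (τ x) = tauH e eStar h τ (projH h x) + eStar x • projH h (τ e) := by
  ext
  simp only [coe_projH_apply, coe_tauH_apply, LinearMap.map_sub, LinearMap.map_smul,
    Submodule.coe_add, Submodule.coe_smul, smul_eq_mul]
  module

theorem dualMap_subtype_dualMap_tau (ψ : Module.Dual R V) :
    (LinearMap.ker eStar).subtype.dualMap (τ.dualMap ψ) =
      (tauH e eStar h τ).dualMap ((LinearMap.ker eStar).subtype.dualMap ψ) +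
        ψ e • eStar ∘ₗ τ ∘ₗ (LinearMap.ker eStar).subtype := by
  ext w
  simp [LinearMap.dualMap_apply, coe_tauH_apply, mul_comm]

theorem cyclicSubmodule_tauH_eq_top (hcyc : cyclicSubmodule τ e = ⊤) :
    cyclicSubmodule (tauH e eStar h τ) (projH h (τ e)) = ⊤ := by
  refine cyclicSubmodule_eq_top_of_intertwine hcyc (projH h) ?_ ?_
    fun x => ⟨_, projH_apply_tau h τ x⟩
  · exact LinearMap.surjective_of_comp_eq_id _ _ (projH_comp_subtype h)
  · rw [projH_apply_self]
    exact zero_mem _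

theorem cyclicSubmodule_dualMap_tauH_eq_top (hcocyc : cyclicSubmodule τ.dualMap eStar = ⊤) :
    cyclicSubmodule (tauH e eStar h τ).dualMap
      (eStar ∘ₗ τ ∘ₗ (LinearMap.ker eStar).subtype) = ⊤ := by
  refine cyclicSubmodule_eq_top_of_intertwine hcocyc (LinearMap.ker eStar).subtype.dualMap ?_ ?_
    fun ψ => ⟨_, dualMap_subtype_dualMap_tau h τ ψ⟩
  · refine LinearMap.surjective_of_comp_eq_id (projH h).dualMap _ ?_
    rw [LinearMap.dualMap_comp_dualMap, projH_comp_subtype, LinearMap.dualMap_id]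
  · rw [show (LinearMap.ker eStar).subtype.dualMap eStar = 0 from LinearMap.ext fun w => w.2]
    exact zero_mem _

end Compression

theorem stmt_11_general {R V : Type*} [CommRing R] [AddCommGroup V] [Module R V]
    (e : V) (eStar : Module.Dual R V) (h : eStar e = 1)
    (τ : Module.End R V)
    (hcyc : ∀ w : V, ∃ p : Polynomial R, Polynomial.aeval τ p e = w)
    (hcocyc : ∀ φ : Module.Dual R V, ∃ p : Polynomial R,
      LinearMap.dualMap (Polynomial.aeval τ p : V →ₗ[R] V) eStar = φ) :
    (∃ v : LinearMap.ker eStar, ∀ w : LinearMap.ker eStar,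
      ∃ p : Polynomial R, Polynomial.aeval (tauH e eStar h τ) p v = w) ∧
    (∀ φ : Module.Dual R (LinearMap.ker eStar), ∃ p : Polynomial R,
      LinearMap.dualMap
        (Polynomial.aeval (tauH e eStar h τ) p :
          LinearMap.ker eStar →ₗ[R] LinearMap.ker eStar)
        (eStar ∘ₗ (τ : V →ₗ[R] V) ∘ₗ (LinearMap.ker eStar).subtype) = φ) := by
  have hV : cyclicSubmodule τ e = ⊤ := cyclicSubmodule_eq_top_iff.mpr hcyc
  have hVdual : cyclicSubmodule τ.dualMap eStar = ⊤ :=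
    cyclicSubmodule_eq_top_iff.mpr <| by simpa only [dualMap_aeval] using hcocyc
  refine ⟨⟨projH h (τ e),
    cyclicSubmodule_eq_top_iff.mp (cyclicSubmodule_tauH_eq_top h τ hV)⟩, ?_⟩
  simpa only [dualMap_aeval] using
    cyclicSubmodule_eq_top_iff.mp (cyclicSubmodule_dualMap_tauH_eq_top h τ hVdual)

/-- Let `R` be a commutative ring, `V = R^{n+1}`, `e, e*` with `e*e = 1`, and `τ` stable
(`e` and `e*` both `τ`-cyclic).  Then the compression `τ_H ∈ End(V_H)` is cyclic; more
precisely, the functional `ℓ(v) = e* τ v` on `V_H` is a cyclic vector for the transpose of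
`τ_H` acting on `V_H^*`. -/
theorem stmt_11 {R V : Type*} [CommRing R] [AddCommGroup V] [Module R V]
    [Module.Free R V] [Module.Finite R V]
    (n : ℕ) (hrank : Module.finrank R V = n + 1)
    (e : V) (eStar : Module.Dual R V) (h : eStar e = 1)
    (τ : Module.End R V)
    (hcyc : ∀ w : V, ∃ p : Polynomial R, Polynomial.aeval τ p e = w)
    (hcocyc : ∀ φ : Module.Dual R V, ∃ p : Polynomial R,
      LinearMap.dualMap (Polynomial.aeval τ p : V →ₗ[R] V) eStar = φ) :
    (∃ v : LinearMap.ker eStar, ∀ w : LinearMap.ker eStar,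
      ∃ p : Polynomial R, Polynomial.aeval (tauH e eStar h τ) p v = w) ∧
    (∀ φ : Module.Dual R (LinearMap.ker eStar), ∃ p : Polynomial R,
      LinearMap.dualMap
        (Polynomial.aeval (tauH e eStar h τ) p :
          LinearMap.ker eStar →ₗ[R] LinearMap.ker eStar)
        (eStar ∘ₗ (τ : V →ₗ[R] V) ∘ₗ (LinearMap.ker eStar).subtype) = φ) :=
  stmt_11_general e eStar h τ hcyc hcocyc
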